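/- arXiv:2508.03198 — 2 statements merged into one kernel-verified Lean document; each statement's English description precedes it below -/
import Mathlib

section
/- Let m₀ be a locally finite measure on ℝ, let u₀ : ℝ → ℝ be Borel measurable with |u₀(η)| ≤ U for m₀-almost every η, let c > 0 and x ∈ ℝ, and define the generalized potential F(y) = ∫_{[0,y)} (η + c·u₀(η) − x) dm₀(η) for y ≥ 0 and F(y) = −∫_{[y,0)} (η + c·u₀(η) − x) dm₀(η) for y < 0. If y₀ ∈ ℝ is a global minimizer of F (i.e., F(y₀) ≤ F(y) for all y ∈ ℝ), then m₀({η : x + cU < η < y₀}) = 0. -/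
/-!
Put `b = x + cU`. Since `u₀ ≥ -U` a.e., the integrand satisfies `g(η) ≥ η - b`, so it is
nonnegative on `[b, y₀)` and positive on `(b, y₀)`. Minimality gives
`0 ≥ F(y₀) - F(b) = ∫_{[b,y₀)} g ≥ ∫_{(b,y₀)} g`, and a function that is positive a.e. on a set
can only have nonpositive integral there if the set is null.
-/

open MeasureTheory

/-- The generalized potential with integrand `g`:
`F(y) = ∫_{[0,y)} g dm₀` for `y ≥ 0` and `F(y) = −∫_{[y,0)} g dm₀` for `y < 0`. -/
noncomputable def genPotential (m₀ : Measure ℝ) (g : ℝ → ℝ) (y : ℝ) : ℝ :=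
  if 0 ≤ y then ∫ η in Set.Ico 0 y, g η ∂m₀ else -∫ η in Set.Ico y 0, g η ∂m₀

open Set

namespace MeasureTheory

variable {α : Type*} [MeasurableSpace α] {μ : Measure α}

theorem measure_eq_zero_of_ae_pos_of_setIntegral_nonpos {f : α → ℝ} {s : Set α}
    (hfi : IntegrableOn f s μ) (hpos : ∀ᵐ a ∂μ.restrict s, 0 < f a)
    (hint : ∫ a in s, f a ∂μ ≤ 0) : μ s = 0 := by
  have hnonneg : 0 ≤ᵐ[μ.restrict s] f := hpos.mono fun _ h => h.le
  have hzero : f =ᵐ[μ.restrict s] 0 :=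
    (setIntegral_eq_zero_iff_of_nonneg_ae hnonneg hfi).mp
      (le_antisymm hint (integral_nonneg_of_ae hnonneg))
  have hfalse : ∀ᵐ a ∂μ.restrict s, False := by
    filter_upwards [hpos, hzero] with a hpos hzero
    exact hpos.ne' hzero
  exact ae_restrict_eq_bot.mp (Filter.eventually_false_iff_eq_bot.mp hfalse)

theorem setIntegral_Ico_add_setIntegral_Ico {m : Measure ℝ} {g : ℝ → ℝ}
    (hg : LocallyIntegrable g m) {p q r : ℝ} (hpq : p ≤ q) (hqr : q ≤ r) :
    ∫ η in Ico p q, g η ∂m + ∫ η in Ico q r, g η ∂m = ∫ η in Ico p r, g η ∂m := by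
  have hint : ∀ a b : ℝ, IntegrableOn g (Ico a b) m := fun a b =>
    (hg.integrableOn_isCompact isCompact_Icc).mono_set Ico_subset_Icc_self
  rw [← Ico_union_Ico_eq_Ico hpq hqr,
    setIntegral_union Ico_disjoint_Ico_same measurableSet_Ico (hint p q) (hint q r)]

end MeasureTheory

theorem genPotential_eq_add_setIntegral_Ico {m : Measure ℝ} {g : ℝ → ℝ}
    (hg : LocallyIntegrable g m) {a b : ℝ} (hab : a ≤ b) :
    genPotential m g b = genPotential m g a + ∫ η in Ico a b, g η ∂m := by
  unfold genPotential
  rcases le_or_gt 0 a with ha | ha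
  · rw [if_pos ha, if_pos (ha.trans hab), setIntegral_Ico_add_setIntegral_Ico hg ha hab]
  rcases le_or_gt 0 b with hb | hb
  · rw [if_neg ha.not_ge, if_pos hb, ← setIntegral_Ico_add_setIntegral_Ico hg ha.le hb]
    ring
  · rw [if_neg ha.not_ge, if_neg hb.not_ge, ← setIntegral_Ico_add_setIntegral_Ico hg hab hb.le]
    ring

theorem minimizer_upper_localization
    (m₀ : Measure ℝ) [IsLocallyFiniteMeasure m₀]
    (u₀ : ℝ → ℝ) (hu₀ : Measurable u₀) (U : ℝ) (hU : ∀ᵐ η ∂m₀, |u₀ η| ≤ U)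
    (c : ℝ) (hc : 0 < c) (x : ℝ) (y₀ : ℝ)
    (hmin : ∀ y : ℝ, genPotential m₀ (fun η => η + c * u₀ η - x) y₀
      ≤ genPotential m₀ (fun η => η + c * u₀ η - x) y) :
    m₀ (Set.Ioo (x + c * U) y₀) = 0 := by
  set b := x + c * U
  set g : ℝ → ℝ := fun η => η + c * u₀ η - x
  rcases le_or_gt y₀ b with hy | hy
  · rw [Ioo_eq_empty hy.not_gt, measure_empty]
  have hu : LocallyIntegrable u₀ m₀ :=
    (memLp_top_of_bound hu₀.aestronglyMeasurable U hU).locallyIntegrable le_top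
  have hg : LocallyIntegrable g m₀ :=
    (continuous_id.locallyIntegrable.add (hu.smul c)).sub (locallyIntegrable_const x)
  have hlower : ∀ᵐ η ∂m₀, η - b ≤ g η := hU.mono fun η hη => by
    nlinarith [neg_abs_le (u₀ η)]
  have hIco : ∫ η in Ico b y₀, g η ∂m₀ ≤ 0 := by
    linarith [hmin b, genPotential_eq_add_setIntegral_Ico hg hy.le]
  have hnonneg : 0 ≤ᵐ[m₀.restrict (Ico b y₀)] g := by
    filter_upwards [ae_restrict_of_ae hlower, ae_restrict_mem measurableSet_Ico] with η h hη
    exact (sub_nonneg.mpr hη.1).trans h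
  have hgIcc : IntegrableOn g (Icc b y₀) m₀ := hg.integrableOn_isCompact isCompact_Icc
  have hIoo : ∫ η in Ioo b y₀, g η ∂m₀ ≤ 0 :=
    (setIntegral_mono_set (hgIcc.mono_set Ico_subset_Icc_self) hnonneg
      Ioo_subset_Ico_self.eventuallyLE).trans hIco
  refine measure_eq_zero_of_ae_pos_of_setIntegral_nonpos (hgIcc.mono_set Ioo_subset_Icc_self)
    ?_ hIoo
  filter_upwards [ae_restrict_of_ae hlower, ae_restrict_mem measurableSet_Ioo] with η h hη
  exact (sub_pos.mpr hη.1).trans_le h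
end

section
/- Let m₀ be a locally finite measure on ℝ, let u₀ : ℝ → ℝ be Borel measurable with |u₀(η)| ≤ U for m₀-almost every η, let c > 0 and x ∈ ℝ, and define the generalized potential F(y) = ∫_{[0,y)} (η + c·u₀(η) − x) dm₀(η) for y ≥ 0 and F(y) = −∫_{[y,0)} (η + c·u₀(η) − x) dm₀(η) for y < 0. If y₀ ∈ ℝ is a global minimizer of F (i.e., F(y₀) ≤ F(y) for all y ∈ ℝ), then m₀({η : y₀ ≤ η < x − cU}) = 0. -/
/-!
On `[y₀, x − cU)` the integrand `η + c·u₀(η) − x` is `m₀`-a.e. negative, since `c·u₀ ≤ cU`.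
Comparing the minimal value `F(y₀)` with `F(x − cU) = F(y₀) + ∫_{[y₀, x − cU)} (η + c·u₀(η) − x) dm₀`
shows that this integral of an a.e. negative function is nonnegative, which forces the interval to
be `m₀`-null.
-/

open MeasureTheory

namespace MeasureTheory

variable {α : Type*} [MeasurableSpace α] {μ : Measure α} {f : α → ℝ}

theorem measure_eq_zero_of_ae_neg_of_integral_nonneg (hfi : Integrable f μ)
    (hf : ∀ᵐ a ∂μ, f a < 0) (hint : 0 ≤ ∫ a, f a ∂μ) : μ = 0 := by
  have hnonneg : 0 ≤ᵐ[μ] fun a => -f a := by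
    filter_upwards [hf] with a ha
    exact (neg_pos.mpr ha).le
  have hzero : (fun a => -f a) =ᵐ[μ] 0 := by
    refine (integral_eq_zero_iff_of_nonneg_ae hnonneg hfi.neg).mp ?_
    rw [integral_neg]
    linarith [integral_nonneg_of_ae hnonneg, integral_neg (μ := μ) f]
  refine ae_eq_bot.mp (Filter.eventually_false_iff_eq_bot.mp ?_)
  filter_upwards [hf, hzero] with a hneg hzero
  simp only [Pi.zero_apply, neg_eq_zero] at hzero
  exact hneg.ne hzero

theorem measure_eq_zero_of_ae_neg_of_setIntegral_nonneg {s : Set α} (hfi : IntegrableOn f s μ)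
    (hf : ∀ᵐ a ∂μ.restrict s, f a < 0) (hint : 0 ≤ ∫ a in s, f a ∂μ) : μ s = 0 :=
  Measure.restrict_eq_zero.mp (measure_eq_zero_of_ae_neg_of_integral_nonneg hfi hf hint)

end MeasureTheory

section GenPotential

variable {m₀ : Measure ℝ} {g : ℝ → ℝ}

theorem MeasureTheory.LocallyIntegrable.integrableOn_Ico (hg : LocallyIntegrable g m₀) (a b : ℝ) :
    IntegrableOn g (Set.Ico a b) m₀ :=
  (hg.integrableOn_isCompact isCompact_Icc).mono_set Set.Ico_subset_Icc_self

theorem setIntegral_Ico_add_Ico (hg : LocallyIntegrable g m₀) {a b c : ℝ} (hab : a ≤ b)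
    (hbc : b ≤ c) :
    ∫ η in Set.Ico a b, g η ∂m₀ + ∫ η in Set.Ico b c, g η ∂m₀ = ∫ η in Set.Ico a c, g η ∂m₀ := by
  rw [← setIntegral_union Set.Ico_disjoint_Ico_same measurableSet_Ico (hg.integrableOn_Ico a b)
      (hg.integrableOn_Ico b c),
    Set.Ico_union_Ico_eq_Ico hab hbc]

theorem genPotential_add_setIntegral_Ico (hg : LocallyIntegrable g m₀) {a b : ℝ} (hab : a ≤ b) :
    genPotential m₀ g a + ∫ η in Set.Ico a b, g η ∂m₀ = genPotential m₀ g b := by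
  unfold genPotential
  by_cases ha : 0 ≤ a
  · rw [if_pos ha, if_pos (ha.trans hab), setIntegral_Ico_add_Ico hg ha hab]
  by_cases hb : 0 ≤ b
  · rw [if_neg ha, if_pos hb, ← setIntegral_Ico_add_Ico hg (not_le.mp ha).le hb]
    ring
  · rw [if_neg ha, if_neg hb, ← setIntegral_Ico_add_Ico hg hab (not_le.mp hb).le]
    ring

theorem setIntegral_Ico_nonneg_of_isMinOn_genPotential (hg : LocallyIntegrable g m₀) {y₀ b : ℝ}
    (hmin : IsMinOn (genPotential m₀ g) Set.univ y₀) (hb : y₀ ≤ b) :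
    0 ≤ ∫ η in Set.Ico y₀ b, g η ∂m₀ := by
  linarith [isMinOn_univ_iff.mp hmin b, genPotential_add_setIntegral_Ico hg hb]

theorem locallyIntegrable_add_const_mul_sub [IsLocallyFiniteMeasure m₀] {u₀ : ℝ → ℝ}
    (hu₀ : Measurable u₀) {U : ℝ} (hU : ∀ᵐ η ∂m₀, |u₀ η| ≤ U) (c x : ℝ) :
    LocallyIntegrable (fun η => η + c * u₀ η - x) m₀ := by
  have hu₀_int : LocallyIntegrable u₀ m₀ :=
    (memLp_top_of_bound hu₀.aestronglyMeasurable U hU).locallyIntegrable le_top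
  exact (continuous_id.locallyIntegrable.add (hu₀_int.smul c)).sub (locallyIntegrable_const x)

end GenPotential

theorem minimizer_lower_localization
    (m₀ : Measure ℝ) [IsLocallyFiniteMeasure m₀]
    (u₀ : ℝ → ℝ) (hu₀ : Measurable u₀) (U : ℝ) (hU : ∀ᵐ η ∂m₀, |u₀ η| ≤ U)
    (c : ℝ) (hc : 0 < c) (x : ℝ) (y₀ : ℝ)
    (hmin : ∀ y : ℝ, genPotential m₀ (fun η => η + c * u₀ η - x) y₀
      ≤ genPotential m₀ (fun η => η + c * u₀ η - x) y) :
    m₀ (Set.Ico y₀ (x - c * U)) = 0 := by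
  rcases le_or_gt (x - c * U) y₀ with hempty | hy₀
  · rw [Set.Ico_eq_empty (not_lt.mpr hempty), measure_empty]
  have hg := locallyIntegrable_add_const_mul_sub hu₀ hU c x
  have hneg : ∀ᵐ η ∂m₀.restrict (Set.Ico y₀ (x - c * U)), η + c * u₀ η - x < 0 := by
    filter_upwards [ae_restrict_of_ae hU, ae_restrict_mem measurableSet_Ico] with η hη hη_mem
    have : c * u₀ η ≤ c * U := mul_le_mul_of_nonneg_left (le_of_abs_le hη) hc.le
    linarith [hη_mem.2]
  exact measure_eq_zero_of_ae_neg_of_setIntegral_nonneg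
    (hg.integrableOn_Ico _ _) hneg
    (setIntegral_Ico_nonneg_of_isMinOn_genPotential hg (isMinOn_univ_iff.mpr hmin) hy₀.le)
end
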